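/- arXiv:2412.04162 — 8 statements merged into one kernel-verified Lean document; each statement's English description precedes it below -/
import Mathlib

section
/- Let X be a compact geodesic metric space, ω a modulus of continuity, f : X → ℝⁿ an ω-continuous function, and P ⊆ X a finite set with Hausdorff distance d_H(P, X) < ε. Then for every δ ≥ ε and every x ∈ ℝⁿ, the sublevel set F_{x−ω(δ)·1} = f⁻¹((−∞, x−ω(δ)·1]) is contained in the union of open geodesic balls of radius δ centered at points p ∈ P with f(p) ≤ x, and this union is contained in F_{x+ω(δ)·1}. -/
open Metric

/-- A metric space is geodesic if any two points are joined by a continuous shortest path,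
parametrized by arclength, of length equal to their distance. -/
def IsGeodesicSpace (X : Type*) [MetricSpace X] : Prop :=
  ∀ x y : X, ∃ γ : ℝ → X, γ 0 = x ∧ γ (dist x y) = y ∧
    ∀ s ∈ Set.Icc (0 : ℝ) (dist x y), ∀ t ∈ Set.Icc (0 : ℝ) (dist x y),
      dist (γ s) (γ t) = |s - t|

/-- A modulus of continuity: a non-decreasing, subadditive function `ω : ℝ≥0 → ℝ≥0`
(here encoded on `ℝ`, restricted to nonnegative arguments) with `ω(δ) → 0` as `δ → 0⁺`. -/
def IsModulusOfContinuity (ω : ℝ → ℝ) : Prop :=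
  (∀ t, 0 ≤ t → 0 ≤ ω t) ∧ MonotoneOn ω (Set.Ici 0) ∧
  (∀ s t, 0 ≤ s → 0 ≤ t → ω (s + t) ≤ ω s + ω t) ∧
  Filter.Tendsto ω (nhdsWithin 0 (Set.Ici 0)) (nhds 0)

/-- Let `X` be a compact geodesic metric space, `ω` a modulus of continuity,
`f : X → ℝⁿ` `ω`-continuous (for the sup norm), and `P ⊆ X` finite with
Hausdorff distance `d_H(P,X) < ε`. Then for every `δ ≥ ε` and `x ∈ ℝⁿ`,
`F_{x−ω(δ)·1} ⊆ ⋃ {B(p,δ) : p ∈ P, f(p) ≤ x} ⊆ F_{x+ω(δ)·1}`,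
where `F_y = f⁻¹((−∞,y])` is the sublevel set. -/
theorem sublevel_offset_sandwich {X : Type*} [MetricSpace X] [CompactSpace X]
    (hgeo : IsGeodesicSpace X) (n : ℕ) (ω : ℝ → ℝ) (hω : IsModulusOfContinuity ω)
    (f : X → (Fin n → ℝ)) (hf : ∀ x y : X, ‖f x - f y‖ ≤ ω (dist x y))
    (P : Finset X) (ε : ℝ) (hε : 0 < ε)
    (hP : EMetric.hausdorffEdist (P : Set X) (Set.univ : Set X) < ENNReal.ofReal ε)
    (δ : ℝ) (hδ : ε ≤ δ) (x : Fin n → ℝ) :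
    {y : X | f y ≤ x - ω δ • (1 : Fin n → ℝ)} ⊆
        (⋃ p ∈ {p : X | p ∈ P ∧ f p ≤ x}, ball p δ) ∧
      (⋃ p ∈ {p : X | p ∈ P ∧ f p ≤ x}, ball p δ) ⊆
        {y : X | f y ≤ x + ω δ • (1 : Fin n → ℝ)} := by
  obtain ⟨hω0, hmono, -, -⟩ := hω
  have key : ∀ a b : X, dist a b ≤ δ → ∀ i, f a i - f b i ≤ ω δ := by
    intro a b hab i
    have h1 : |f a i - f b i| ≤ ‖f a - f b‖ := by
      simpa using norm_le_pi_norm (f a - f b) i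
    have h2 : ω (dist a b) ≤ ω δ :=
      hmono dist_nonneg (le_trans dist_nonneg hab) hab
    calc f a i - f b i ≤ |f a i - f b i| := le_abs_self _
      _ ≤ ω (dist a b) := h1.trans (hf a b)
      _ ≤ ω δ := h2
  constructor
  · intro y hy
    have hy' : f y ≤ x - ω δ • (1 : Fin n → ℝ) := hy
    have : EMetric.infEdist y (P : Set X) < ENNReal.ofReal ε := by
      calc EMetric.infEdist y (P : Set X)
          ≤ EMetric.hausdorffEdist (Set.univ : Set X) (P : Set X) :=
            EMetric.infEdist_le_hausdorffEdist_of_mem (Set.mem_univ y)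
        _ = EMetric.hausdorffEdist (P : Set X) (Set.univ : Set X) :=
            EMetric.hausdorffEdist_comm
        _ < ENNReal.ofReal ε := hP
    obtain ⟨p, hpP, hplt⟩ := EMetric.infEdist_lt_iff.mp this
    have hdist : dist y p < ε := by
      rw [dist_edist]; exact (ENNReal.toReal_lt_toReal (edist_ne_top _ _)
        ENNReal.ofReal_ne_top).mpr (by simpa [ENNReal.ofReal, hε.le] using hplt) |>.trans_le
        (by rw [ENNReal.toReal_ofReal hε.le])
    have hfp : f p ≤ x := by
      intro i
      have := key p y (by rw [dist_comm]; exact hdist.le.trans hδ) i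
      have hyi := hy' i
      simp only [Pi.sub_apply, Pi.smul_apply, Pi.one_apply, smul_eq_mul, mul_one] at hyi
      linarith
    exact Set.mem_biUnion ⟨hpP, hfp⟩ (by rw [mem_ball]; linarith)
  · intro y hy
    obtain ⟨p, hp, hyp⟩ := Set.mem_iUnion₂.mp hy
    obtain ⟨hpP, hfp⟩ := hp
    intro i
    have := key y p (by rw [mem_ball] at hyp; exact hyp.le) i
    have hpi := hfp i
    simp only [Pi.add_apply, Pi.smul_apply, Pi.one_apply, smul_eq_mul, mul_one]
    linarith
end

section
/- Let X be a compact geodesic space, f : X → ℝⁿ an ω-continuous function for a modulus of continuity ω, and P a finite geodesic ε-sample of X. Then for any δ ≥ ε, the persistence modules H_*(f) (persistent homology of the sublevel filtration of f) and H_*(O^δ(f|_P)) (persistent homology of the filtration x ↦ ⋃_{p∈P, f(p)≤x} B_X(p,δ)) are ordinarily ω(δ)-interleaved. -/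
open CategoryTheory Metric

/-- `ℝⁿ` as a poset (with the product order), viewed as a thin category. -/
def Rn (n : ℕ) : Type := Fin n → ℝ

instance (n : ℕ) : Preorder (Rn n) := inferInstanceAs (Preorder (Fin n → ℝ))

/-- Translation of `ℝⁿ` by a vector `c`. -/
def shiftMap (n : ℕ) (c : Fin n → ℝ) : Rn n → Rn n := fun x => (fun i => x i + c i : Fin n → ℝ)

lemma shiftMap_monotone (n : ℕ) (c : Fin n → ℝ) : Monotone (shiftMap n c) :=
  fun _ _ h i => add_le_add (h i) (le_refl (c i))

/-- The `c`-shift functor on `ℝⁿ`. -/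
def shiftFunctor (n : ℕ) (c : Fin n → ℝ) : Rn n ⥤ Rn n :=
  Monotone.functor (shiftMap_monotone n c)

/-- Two functors `F, G : ℝⁿ → C` are `c`-interleaved. -/
def Interleaved {C : Type*} [Category C] (n : ℕ) (c : Fin n → ℝ) (F G : Rn n ⥤ C) : Prop :=
  ∃ (f : F ⟶ shiftFunctor n c ⋙ G) (g : G ⟶ shiftFunctor n c ⋙ F),
    (∀ (x : Rn n) (h : x ≤ shiftMap n c (shiftMap n c x)),
        f.app x ≫ g.app (shiftMap n c x) = F.map (homOfLE h)) ∧
    (∀ (x : Rn n) (h : x ≤ shiftMap n c (shiftMap n c x)),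
        g.app x ≫ f.app (shiftMap n c x) = G.map (homOfLE h))

/-- The singular chain complex functor with coefficients in a field `K`. -/
noncomputable def singularChains (K : Type) [Field K] : TopCat ⥤ ChainComplex (ModuleCat K) ℕ :=
  TopCat.toSSet ⋙ ((SimplicialObject.whiskering _ _).obj (ModuleCat.free K)) ⋙
    AlgebraicTopology.alternatingFaceMapComplex (ModuleCat K)

/-- Singular homology in degree `q`, with coefficients in a field `K`, as a functor. -/
noncomputable def singularHomologyFunctor (K : Type) [Field K] (q : ℕ) : TopCat ⥤ ModuleCat K :=
  singularChains K ⋙ HomologicalComplex.homologyFunctor _ _ q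

variable {X : Type} [MetricSpace X] {n : ℕ}

/-- The sublevel-set filtration of `f : X → ℝⁿ`, as a functor `ℝⁿ ⥤ Top`. -/
def sublevelFiltration (f : X → (Fin n → ℝ)) : Rn n ⥤ TopCat where
  obj x := TopCat.of {y : X | f y ≤ (x : Fin n → ℝ)}
  map {_ _} h := TopCat.ofHom ⟨Set.inclusion (fun _ hp => le_trans hp (leOfHom h)), continuous_inclusion _⟩
  map_id _ := rfl
  map_comp _ _ := rfl

/-- The function-offset filtration `O^δ(f|_P)`: at index `x` it is the union of the open
geodesic balls of radius `δ` centered at the points `p ∈ P` with `f p ≤ x`. -/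
def offsetFiltration (f : X → (Fin n → ℝ)) (P : Finset X) (δ : ℝ) : Rn n ⥤ TopCat where
  obj x := TopCat.of (⋃ p ∈ {p : X | p ∈ P ∧ f p ≤ (x : Fin n → ℝ)}, ball p δ)
  map {_ _} h := TopCat.ofHom ⟨Set.inclusion (Set.biUnion_subset_biUnion_left
      (fun _ hp => ⟨hp.1, le_trans hp.2 (leOfHom h)⟩)), continuous_inclusion _⟩
  map_id _ := rfl
  map_comp _ _ := rfl

/-!
Both filtrations are filtrations of `X` by subspaces, and they are nested up to a shift by
`ω δ`: a point `y` of a sublevel set lies within `ε ≤ δ` of a sample point `p`, and then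
`f p ≤ f y + ω δ`; conversely a point of the `δ`-ball around a sample point `p` has value at
most `f p + ω δ`. Inclusions therefore interleave the two filtrations (their composites are again
inclusions), and any functor, in particular singular homology, preserves an interleaving.
-/

def subspaceFiltration {ι Y : Type*} [Preorder ι] [TopologicalSpace Y] (S : ι → Set Y)
    (hS : Monotone S) : ι ⥤ TopCat where
  obj x := TopCat.of (S x)
  map h := TopCat.ofHom ⟨Set.inclusion (hS (leOfHom h)), continuous_inclusion _⟩

lemma sublevelFiltration_eq_subspaceFiltration (f : X → (Fin n → ℝ)) :
    sublevelFiltration f = subspaceFiltration (fun x : Rn n => {y : X | f y ≤ (x : Fin n → ℝ)})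
      (fun _ _ h _ hy => le_trans hy h) :=
  rfl

lemma offsetFiltration_eq_subspaceFiltration (f : X → (Fin n → ℝ)) (P : Finset X) (δ : ℝ) :
    offsetFiltration f P δ = subspaceFiltration
      (fun x : Rn n => ⋃ p ∈ {p : X | p ∈ P ∧ f p ≤ (x : Fin n → ℝ)}, ball p δ)
      (fun _ _ h => Set.biUnion_subset_biUnion_left fun _ hp => ⟨hp.1, le_trans hp.2 h⟩) :=
  rfl

lemma Interleaved.comp_right {C D : Type*} [Category C] [Category D] {c : Fin n → ℝ}
    {F G : Rn n ⥤ C} (h : Interleaved n c F G) (H : C ⥤ D) :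
    Interleaved n c (F ⋙ H) (G ⋙ H) := by
  obtain ⟨η, ζ, hηζ, hζη⟩ := h
  refine ⟨Functor.whiskerRight η H, Functor.whiskerRight ζ H, fun x hx => ?_, fun x hx => ?_⟩
  · exact (H.map_comp _ _).symm.trans (congrArg H.map (hηζ x hx))
  · exact (H.map_comp _ _).symm.trans (congrArg H.map (hζη x hx))

lemma interleaved_subspaceFiltration {Y : Type*} [TopologicalSpace Y] {c : Fin n → ℝ}
    {S T : Rn n → Set Y} (hS : Monotone S) (hT : Monotone T)
    (hST : ∀ x, S x ⊆ T (shiftMap n c x)) (hTS : ∀ x, T x ⊆ S (shiftMap n c x)) :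
    Interleaved n c (subspaceFiltration S hS) (subspaceFiltration T hT) :=
  ⟨{ app := fun x => TopCat.ofHom ⟨Set.inclusion (hST x), continuous_inclusion _⟩ },
    { app := fun x => TopCat.ofHom ⟨Set.inclusion (hTS x), continuous_inclusion _⟩ },
    fun _ _ => rfl, fun _ _ => rfl⟩

lemma apply_le_apply_add_of_dist_le {Y ι : Type*} [PseudoMetricSpace Y] [Fintype ι]
    {ω : ℝ → ℝ} (hω : MonotoneOn ω (Set.Ici 0)) {f : Y → (ι → ℝ)}
    (hf : ∀ x y : Y, ‖f x - f y‖ ≤ ω (dist x y)) {δ : ℝ} {x y : Y} (hxy : dist x y ≤ δ) (i : ι) : f x i ≤ f y i + ω δ := by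
  have hcoord : f x i - f y i ≤ ‖f x - f y‖ :=
    (le_abs_self _).trans (norm_le_pi_norm (f x - f y) i)
  have hmono : ω (dist x y) ≤ ω δ := hω dist_nonneg (dist_nonneg.trans hxy) hxy
  linarith [hf x y]

lemma exists_mem_dist_lt_of_hausdorffEDist_lt {Y : Type*} [PseudoMetricSpace Y] {s : Set Y}
    {ε : ℝ} (hs : hausdorffEDist s Set.univ < ENNReal.ofReal ε) (y : Y) : ∃ p ∈ s, dist y p < ε := by
  rw [hausdorffEDist_comm] at hs
  obtain ⟨p, hp, hyp⟩ := exists_edist_lt_of_hausdorffEDist_lt (Set.mem_univ y) hs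
  exact ⟨p, hp, edist_lt_ofReal.mp hyp⟩

theorem offset_estimator_interleaved_general
    (K : Type) [Field K] (q : ℕ)
    (ω : ℝ → ℝ) (hω : IsModulusOfContinuity ω)
    (f : X → (Fin n → ℝ)) (hf : ∀ x y : X, ‖f x - f y‖ ≤ ω (dist x y))
    (P : Finset X) (ε : ℝ)
    (hP : EMetric.hausdorffEdist (P : Set X) (Set.univ : Set X) < ENNReal.ofReal ε)
    (δ : ℝ) (hδ : ε ≤ δ) :
    Interleaved n (fun _ => ω δ)
      (sublevelFiltration f ⋙ singularHomologyFunctor K q)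
      (offsetFiltration f P δ ⋙ singularHomologyFunctor K q) := by
  rw [sublevelFiltration_eq_subspaceFiltration, offsetFiltration_eq_subspaceFiltration]
  refine (interleaved_subspaceFiltration _ _ (fun x y hy => ?_) (fun x y hy => ?_)).comp_right _
  · obtain ⟨p, hp, hypε⟩ := exists_mem_dist_lt_of_hausdorffEDist_lt hP y
    have hyp : dist y p < δ := hypε.trans_le hδ
    refine Set.mem_biUnion ⟨hp, fun i => ?_⟩ (mem_ball.mpr hyp)
    exact (apply_le_apply_add_of_dist_le hω.2.1 hf ((dist_comm p y).trans_le hyp.le) i).trans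
      (add_le_add (hy i) le_rfl)
  · obtain ⟨p, ⟨-, hpx⟩, hyp⟩ := Set.mem_iUnion₂.mp hy
    intro i
    exact (apply_le_apply_add_of_dist_le hω.2.1 hf (mem_ball.mp hyp).le i).trans
      (add_le_add (hpx i) le_rfl)

/-- Let `X` be a compact geodesic space, `f : X → ℝⁿ` an `ω`-continuous function for a
modulus of continuity `ω`, and `P` a finite geodesic `ε`-sample of `X`.  Then for any
`δ ≥ ε`, the persistence modules `H_*(f)` (persistent homology of the sublevel filtration)
and `H_*(O^δ(f|_P))` (persistent homology of the function-offset filtration) are ordinarily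
`ω(δ)`-interleaved (interleaving in the diagonal direction `1 = (1,…,1)`). -/
theorem offset_estimator_interleaved [CompactSpace X] (hgeo : IsGeodesicSpace X)
    (K : Type) [Field K] (q : ℕ)
    (ω : ℝ → ℝ) (hω : IsModulusOfContinuity ω)
    (f : X → (Fin n → ℝ)) (hf : ∀ x y : X, ‖f x - f y‖ ≤ ω (dist x y))
    (P : Finset X) (ε : ℝ) (hε : 0 < ε)
    (hP : EMetric.hausdorffEdist (P : Set X) (Set.univ : Set X) < ENNReal.ofReal ε)
    (δ : ℝ) (hδ : ε ≤ δ) :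
    Interleaved n (fun _ => ω δ)
      (sublevelFiltration f ⋙ singularHomologyFunctor K q)
      (offsetFiltration f P δ ⋙ singularHomologyFunctor K q) :=
  offset_estimator_interleaved_general K q ω hω f hf P ε hP δ hδ
end

section
/- Let M and N be finitely presented persistence modules over ℝⁿ, with presentations p₁ : P₁ → P₀ (with cokernel map p₀ : P₀ ↠ M) and q₁ : Q₁ → Q₀ (with cokernel map q₀ : Q₀ ↠ N). Let τ : M → N be a morphism, lifted to γ : P₀ → Q₀ with q₀ ∘ γ = τ ∘ p₀. Let P₁' be the pullback of P₀ → Q₀ ← Q₁ (i.e., the kernel of γ − q₁ : P₀ ⊕ Q₁ → Q₀), with projection π₀ : P₁' → P₀, and let β : P₂' ↠ P₁' be a projective cover of P₁'. Then the sequence P₂' → P₀ → im(τ) → 0 is exact, where the first map is π₀ ∘ β and the second is the factorization η of τ ∘ p₀ through im(τ). Hence π₀ ∘ β is a presentation of im(τ). -/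
open CategoryTheory CategoryTheory.Limits

/-- The abelian category of persistence modules over `ℝⁿ` with coefficients in `K`. -/
abbrev PersMod (n : ℕ) (K : Type) [Field K] := Rn n ⥤ ModuleCat K

/-- Computing a presentation of the image of a morphism `τ : M → N` of finitely presented
persistence modules over `ℝⁿ`.  Given presentations `P₁ → P₀ ↠ M` and `Q₁ → Q₀ ↠ N`, a lift
`γ : P₀ → Q₀` of `τ` (`q₀ ∘ γ = τ ∘ p₀`), the pullback `P₁' = ker(γ − q₁ : P₀ ⊕ Q₁ → Q₀)`
with projection `π₀ = ker.ι ≫ fst : P₁' → P₀`, and a projective cover (here: any epimorphism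
from a projective) `β : P₂' ↠ P₁'`, the sequence `P₂' → P₀ → im(τ) → 0` is exact, where the
first map is `π₀ ∘ β` and the second is the factorization `η = p₀ ≫ factorThruImage τ` of
`τ ∘ p₀` through `im(τ)`.  Hence `π₀ ∘ β` is a presentation of `im(τ)`. -/
theorem image_presentation_exact (n : ℕ) (K : Type) [Field K]
    (P₁ P₀ M Q₁ Q₀ N : PersMod n K)
    (p₁ : P₁ ⟶ P₀) (p₀ : P₀ ⟶ M) (q₁ : Q₁ ⟶ Q₀) (q₀ : Q₀ ⟶ N)
    (hp0 : p₁ ≫ p₀ = 0) (hq0 : q₁ ≫ q₀ = 0)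
    (hpE : (ShortComplex.mk p₁ p₀ hp0).Exact) (hp₀ : Epi p₀)
    (hqE : (ShortComplex.mk q₁ q₀ hq0).Exact) (hq₀ : Epi q₀)
    (τ : M ⟶ N) (γ : P₀ ⟶ Q₀) (hγ : γ ≫ q₀ = p₀ ≫ τ)
    (P₂' : PersMod n K) (hproj : Projective P₂')
    (β : P₂' ⟶ kernel (biprod.desc γ (-q₁))) (hβ : Epi β) :
    Epi (p₀ ≫ factorThruImage τ) ∧
    ∃ hz : (β ≫ kernel.ι (biprod.desc γ (-q₁)) ≫ biprod.fst) ≫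
        (p₀ ≫ factorThruImage τ) = 0,
      (ShortComplex.mk (β ≫ kernel.ι (biprod.desc γ (-q₁)) ≫ biprod.fst)
        (p₀ ≫ factorThruImage τ) hz).Exact := by
  have key : biprod.fst ≫ γ - biprod.snd ≫ q₁ = biprod.desc γ (-q₁) := by
    rw [biprod.desc_eq]
    simp [sub_eq_add_neg]
  have hk : kernel.ι (biprod.desc γ (-q₁)) ≫ biprod.fst ≫ γ =
      kernel.ι (biprod.desc γ (-q₁)) ≫ biprod.snd ≫ q₁ := by
    rw [← sub_eq_zero, ← Preadditive.comp_sub, key, kernel.condition]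
  have hzτ : (β ≫ kernel.ι (biprod.desc γ (-q₁)) ≫ biprod.fst) ≫ p₀ ≫ τ = 0 := by
    rw [← hγ]
    have h2 : kernel.ι (biprod.desc γ (-q₁)) ≫ biprod.fst ≫ γ ≫ q₀ = 0 := by
      rw [reassoc_of% hk, hq0]
      simp
    simp only [Category.assoc]
    rw [h2, comp_zero]
  have hz : (β ≫ kernel.ι (biprod.desc γ (-q₁)) ≫ biprod.fst) ≫
      (p₀ ≫ factorThruImage τ) = 0 := by
    rw [← cancel_mono (image.ι τ)]
    simpa using hzτ
  refine ⟨epi_comp _ _, hz, ?_⟩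
  apply CategoryTheory.Abelian.Pseudoelement.exact_of_pseudo_exact
  intro x hx
  have hτx : Abelian.Pseudoelement.pseudoApply (p₀ ≫ τ) x = 0 := by
    have h3 : p₀ ≫ τ = (p₀ ≫ factorThruImage τ) ≫ image.ι τ := by simp
    rw [h3, CategoryTheory.Abelian.Pseudoelement.comp_apply, hx,
      CategoryTheory.Abelian.Pseudoelement.apply_zero]
  have hq : Abelian.Pseudoelement.pseudoApply q₀
      (Abelian.Pseudoelement.pseudoApply γ x) = 0 := by
    rw [← CategoryTheory.Abelian.Pseudoelement.comp_apply, hγ]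
    exact hτx
  obtain ⟨y, hy⟩ :=
    CategoryTheory.Abelian.Pseudoelement.pseudo_exact_of_exact hqE
      (Abelian.Pseudoelement.pseudoApply γ x) hq
  obtain ⟨s, hs₁, hs₂⟩ :=
    CategoryTheory.Abelian.Pseudoelement.pseudo_pullback (f := γ) (g := q₁)
      (p := x) (q := y) (by rw [hy])
  let e : pullback γ q₁ ≅ kernel (biprod.desc γ (-q₁)) :=
    IsLimit.conePointUniqueUpToIso
      (Abelian.PullbackToBiproductIsKernel.isLimitPullbackToBiproduct γ q₁)
      (limit.isLimit _)
  have he : e.hom ≫ kernel.ι (biprod.desc γ (-q₁)) =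
      Abelian.PullbackToBiproductIsKernel.pullbackToBiproduct γ q₁ :=
    IsLimit.conePointUniqueUpToIso_hom_comp _ _ WalkingParallelPair.zero
  have he' : e.hom ≫ kernel.ι (biprod.desc γ (-q₁)) ≫ biprod.fst =
      pullback.fst γ q₁ := by
    rw [← Category.assoc, he]
    simp
  obtain ⟨w, hw⟩ :=
    CategoryTheory.Abelian.Pseudoelement.pseudo_surjective_of_epi β
      (Abelian.Pseudoelement.pseudoApply e.hom s)
  refine ⟨w, ?_⟩
  show Abelian.Pseudoelement.pseudoApply
    (β ≫ kernel.ι (biprod.desc γ (-q₁)) ≫ biprod.fst) w = x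
  rw [CategoryTheory.Abelian.Pseudoelement.comp_apply, hw,
    ← CategoryTheory.Abelian.Pseudoelement.comp_apply, he', hs₁]
end

section
/- Let M, N : [a,b] × ℝⁿ → vec be free persistence modules (direct sums of interval modules on free intervals [x₀,b] × [x₁,∞) × ⋯ × [xₙ,∞)) that are vertically ε-interleaved. For δ ∈ [a,b], let M^δ (resp. N^δ) be the direct summand of M (resp. N) consisting of all interval summands whose free interval has first coordinate exactly δ. Then M^δ and N^δ are vertically ε-interleaved. -/
open CategoryTheory CategoryTheory.Limits
open scoped ENNReal

/-- The poset `[a,b] × ℝⁿ` (product order), viewed as a thin category. -/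
def Slab (a b : ℝ) (n : ℕ) : Type := Set.Icc a b × (Fin n → ℝ)

instance (a b : ℝ) (n : ℕ) : Preorder (Slab a b n) :=
  inferInstanceAs (Preorder (Set.Icc a b × (Fin n → ℝ)))

variable {a b : ℝ} {n : ℕ}

/-- The vertical shift by `ε·1₀`, `1₀ = (0,1,…,1)`: `(s, x) ↦ (s, x + ε·1)`. -/
def vshift (ε : ℝ) (p : Slab a b n) : Slab a b n := (p.1, fun i => p.2 i + ε)

lemma vshift_monotone (ε : ℝ) : Monotone (vshift (a := a) (b := b) (n := n) ε) :=
  fun _ _ h => Prod.le_def.mpr ⟨(Prod.le_def.mp h).1,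
    fun i => (add_le_add_iff_right ε).mpr ((Prod.le_def.mp h).2 i)⟩

/-- The vertical `ε·1₀`-shift functor on `[a,b] × ℝⁿ`. -/
def vshiftFunctor (a b : ℝ) (n : ℕ) (ε : ℝ) : Slab a b n ⥤ Slab a b n :=
  Monotone.functor (vshift_monotone ε)

variable (K : Type) [Field K]

/-- Persistence modules over `[a,b] × ℝⁿ`. -/
abbrev SlabMod (a b : ℝ) (n : ℕ) (K : Type) [Field K] := Slab a b n ⥤ ModuleCat K

/-- Vertical `ε`-interleaving (i.e. `ε·1₀`-interleaving, `1₀ = (0,1,…,1)`) between two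
persistence modules over `[a,b] × ℝⁿ`. -/
def VertInterleaved (ε : ℝ) (M N : SlabMod a b n K) : Prop :=
  ∃ (f : M ⟶ vshiftFunctor a b n ε ⋙ N) (g : N ⟶ vshiftFunctor a b n ε ⋙ M),
    (∀ (p : Slab a b n) (h : p ≤ vshift ε (vshift ε p)),
        f.app p ≫ g.app (vshift ε p) = M.map (homOfLE h)) ∧
    (∀ (p : Slab a b n) (h : p ≤ vshift ε (vshift ε p)),
        g.app p ≫ f.app (vshift ε p) = N.map (homOfLE h))

/-- The vertical interleaving distance `d_I^{1₀}`. -/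
noncomputable def vertInterleavingDist (M N : SlabMod a b n K) : ℝ≥0∞ :=
  sInf {e : ℝ≥0∞ | ∃ ε : ℝ, 0 ≤ ε ∧ e = ENNReal.ofReal ε ∧ VertInterleaved K ε M N}

/-- The free interval (principal upset) generated by `c`, at the level of types:
`p ↦ PLift (c ≤ p)`. -/
def upFunctor (c : Slab a b n) : Slab a b n ⥤ Type where
  obj p := PLift (c ≤ p)
  map h := TypeCat.ofHom fun t => ⟨t.down.trans (leOfHom h)⟩
  map_id _ := rfl
  map_comp _ _ := rfl

/-- The interval module `k^J` on the free interval `J = [c, ∞)` (within `[a,b] × ℝⁿ`,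
a free interval `[x₀,b] × [x₁,∞) × ⋯ × [xₙ,∞)` is exactly the principal upset of a point). -/
noncomputable def upMod (c : Slab a b n) : SlabMod a b n K :=
  upFunctor c ⋙ ModuleCat.free K

/-- The free persistence module with one generator at `gen i` for each `i`. -/
noncomputable def freeMod {ι : Type} (gen : ι → Slab a b n) : SlabMod a b n K :=
  (show Slab a b n ⥤ Type from
    { obj := fun p => Σ i : ι, PLift (gen i ≤ p)
      map := fun h => TypeCat.ofHom fun t => ⟨t.1, ⟨t.2.down.trans (leOfHom h)⟩⟩
      map_id := fun _ => rfl
      map_comp := fun _ _ => rfl }) ⋙ ModuleCat.free K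

/-- The zero persistence module. -/
noncomputable def zeroMod : SlabMod a b n K :=
  (CategoryTheory.Functor.const (Slab a b n)).obj (ModuleCat.of K PUnit)

/-- A vertical `ε·1₀`-bottleneck matching between two multisets of free intervals, given by
families of generators `cB : ι → [a,b]×ℝⁿ` and `cC : κ → [a,b]×ℝⁿ`: a bijection between
subsets matching intervals whose interval modules are vertically `ε`-interleaved, all
unmatched intervals having interval modules vertically `ε`-interleaved with `0`. -/
def BottleneckMatch (ε : ℝ) {ι κ : Type} (cB : ι → Slab a b n) (cC : κ → Slab a b n) : Prop :=
  ∃ (s : Set ι) (t : Set κ) (e : s ≃ t),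
    (∀ i : s, VertInterleaved K ε (upMod K (cB i)) (upMod K (cC (e i)))) ∧
    (∀ i : ι, i ∉ s → VertInterleaved K ε (upMod K (cB i)) (zeroMod K)) ∧
    (∀ j : κ, j ∉ t → VertInterleaved K ε (upMod K (cC j)) (zeroMod K))

/-- The vertical bottleneck distance `d_B^{1₀}` between two barcodes of free intervals. -/
noncomputable def vertBottleneckDist {ι κ : Type} (cB : ι → Slab a b n)
    (cC : κ → Slab a b n) : ℝ≥0∞ :=
  sInf {e : ℝ≥0∞ | ∃ ε : ℝ, 0 ≤ ε ∧ e = ENNReal.ofReal ε ∧ BottleneckMatch K ε cB cC}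

/-!
A morphism `freeMod cB ⟶ F ⋙ freeMod cC`, where `F` does not increase the first coordinate
(as the vertical shift), sends a generator born at `x` to a combination of generators born below
`F x`, hence at first coordinate at most that of `x`. Restricting an interleaving `f, g` to the
level-`δ` summands (include, apply, project) therefore discards only components of `f` at levels
`< δ`; `g` sends those again to levels `< δ`, which the final projection kills, so the restricted
maps still compose to the shift morphisms.
-/

namespace freeMod

variable {K} {ι κ : Type}

abbrev Gen (c : ι → Slab a b n) (p : Slab a b n) : Type := Σ i : ι, PLift (c i ≤ p)

noncomputable def single (c : ι → Slab a b n) {p : Slab a b n} (t : Gen c p) :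
    (freeMod K c).obj p :=
  Finsupp.single t 1

@[ext]
lemma hom_ext (c : ι → Slab a b n) {p : Slab a b n} {M : ModuleCat K}
    {f g : (freeMod K c).obj p ⟶ M} (h : ∀ t : Gen c p, f (single c t) = g (single c t)) :
    f = g :=
  ModuleCat.free_hom_ext h

lemma map_single (c : ι → Slab a b n) {p q : Slab a b n} (h : p ⟶ q) (t : Gen c p) :
    (freeMod K c).map h (single c t) = single c ⟨t.1, ⟨t.2.down.trans (leOfHom h)⟩⟩ :=
  Finsupp.mapDomain_single

def firstCoord (c : ι → Slab a b n) {p : Slab a b n} (t : Gen c p) : Set.Icc a b := (c t.1).1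

noncomputable def supported (c : ι → Slab a b n) {p : Slab a b n} (S : Set (Gen c p)) :
    Submodule K ((freeMod K c).obj p) :=
  Finsupp.supported K K S

lemma single_mem_supported (c : ι → Slab a b n) {p : Slab a b n} {S : Set (Gen c p)}
    {t : Gen c p} (ht : t ∈ S) : single c t ∈ supported (K := K) c S :=
  Finsupp.single_mem_supported K (1 : K) ht

lemma supported_mono (c : ι → Slab a b n) {p : Slab a b n} {S T : Set (Gen c p)} (h : S ⊆ T) :
    supported (K := K) c S ≤ supported c T :=
  Finsupp.supported_mono (M := K) (R := K) h

lemma apply_mem_of_mem_supported (c : ι → Slab a b n) {p : Slab a b n} {M : ModuleCat K}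
    (L : (freeMod K c).obj p ⟶ M) {S : Set (Gen c p)} {T : Submodule K M}
    (h : ∀ t ∈ S, L (single c t) ∈ T) {x : (freeMod K c).obj p}
    (hx : x ∈ supported c S) : L x ∈ T := by
  have hspan : supported c S = Submodule.span K (single c '' S) :=
    Finsupp.supported_eq_span_single K S
  rw [hspan] at hx
  refine Submodule.span_induction (fun _ ⟨t, ht, hxt⟩ => hxt ▸ h t ht) ?_ ?_ ?_ hx
  · simp
  · intro x y _ _ hx hy
    simpa using add_mem hx hy
  · intro k x _ hx
    simpa using T.smul_mem k hx

lemma map_mem_supported (c : ι → Slab a b n) {q r : Slab a b n} (h : q ⟶ r)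
    (x : (freeMod K c).obj q) :
    (freeMod K c).map h x ∈ supported c {s : Gen c r | c s.1 ≤ q} :=
  Finsupp.supported_comap_lmapDomain K K
    (fun t : Gen c q => (⟨t.1, ⟨t.2.down.trans (leOfHom h)⟩⟩ : Gen c r)) _ (x := x)
    fun t _ => t.2.down

section Morphisms

variable {cB : ι → Slab a b n} {cC : κ → Slab a b n} {F : Slab a b n ⥤ Slab a b n}
  (φ : freeMod K cB ⟶ F ⋙ freeMod K cC)

lemma app_single_mem_supported {p : Slab a b n} (t : Gen cB p) :
    φ.app p (single cB t) ∈ supported cC {s : Gen cC (F.obj p) | cC s.1 ≤ F.obj (cB t.1)} := by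
  have hgen : single cB t =
      (freeMod K cB).map (homOfLE t.2.down) (single cB ⟨t.1, ⟨le_rfl⟩⟩) := by
    rw [map_single]
  rw [hgen, ← ConcreteCategory.comp_apply, φ.naturality, ConcreteCategory.comp_apply]
  exact map_mem_supported cC _ _

lemma app_mem_supported (hF : ∀ q, (F.obj q).1 ≤ q.1) {Q : Set (Set.Icc a b)}
    (hQ : IsLowerSet Q) {p : Slab a b n} {x : (freeMod K cB).obj p}
    (hx : x ∈ supported cB (firstCoord cB ⁻¹' Q)) :
    φ.app p x ∈ supported cC (firstCoord cC ⁻¹' Q) := by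
  refine apply_mem_of_mem_supported cB (φ.app p) (fun t ht => ?_) hx
  refine supported_mono cC (fun s hs => ?_) (app_single_mem_supported φ t)
  exact hQ ((Prod.le_def.mp hs).1.trans (hF _)) ht

end Morphisms

section Restrict

variable (c : ι → Slab a b n) (P : ι → Prop)

noncomputable def inclApp (p : Slab a b n) :
    (freeMod K (fun i : {i // P i} => c i.1)).obj p ⟶ (freeMod K c).obj p :=
  ModuleCat.ofHom (Finsupp.lmapDomain K K fun t : Gen _ p => (⟨t.1.1, t.2⟩ : Gen c p))

lemma inclApp_single {p : Slab a b n} (t : Gen (fun i : {i // P i} => c i.1) p) :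
    inclApp (K := K) c P p (single _ t) = single c ⟨t.1.1, t.2⟩ :=
  Finsupp.mapDomain_single

noncomputable def incl : freeMod K (fun i : {i // P i} => c i.1) ⟶ freeMod K c where
  app := inclApp c P
  naturality p q h := by
    ext t
    simp only [ConcreteCategory.comp_apply, map_single, inclApp_single]

@[simp]
lemma incl_app (p : Slab a b n) : (incl (K := K) c P).app p = inclApp c P p := rfl

open Classical in
noncomputable def projApp (p : Slab a b n) :
    (freeMod K c).obj p ⟶ (freeMod K (fun i : {i // P i} => c i.1)).obj p :=
  ModuleCat.ofHom (Finsupp.lsum (N := Gen (fun i : {i // P i} => c i.1) p →₀ K) K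
    fun t : Gen c p => if h : P t.1 then Finsupp.lsingle ⟨⟨t.1, h⟩, t.2⟩ else 0)

open Classical in
lemma projApp_single {p : Slab a b n} (t : Gen c p) :
    projApp (K := K) c P p (single c t) =
      if h : P t.1 then single _ ⟨⟨t.1, h⟩, t.2⟩ else 0 := by
  change Finsupp.lsum (N := Gen (fun i : {i // P i} => c i.1) p →₀ K) K _
    (Finsupp.single t 1) = _
  rw [Finsupp.lsum_single]
  split_ifs <;> rfl

noncomputable def proj : freeMod K c ⟶ freeMod K (fun i : {i // P i} => c i.1) where
  app := projApp c P
  naturality p q h := by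
    ext t
    by_cases ht : P t.1 <;> simp [projApp_single, map_single, ht]

@[simp]
lemma proj_app (p : Slab a b n) : (proj (K := K) c P).app p = projApp c P p := rfl

lemma projApp_eq_zero_of_mem_supported {p : Slab a b n} {x : (freeMod K c).obj p}
    (hx : x ∈ supported c {t : Gen c p | ¬ P t.1}) : projApp c P p x = 0 := by
  refine (Submodule.mem_bot K).mp (apply_mem_of_mem_supported c _ (fun t ht => ?_) hx)
  simp [projApp_single, ht.out]

lemma sub_inclApp_projApp_mem_supported {p : Slab a b n} {S : Set (Gen c p)}
    {x : (freeMod K c).obj p} (hx : x ∈ supported c S) :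
    x - inclApp c P p (projApp c P p x) ∈ supported c (S ∩ {t | ¬ P t.1}) := by
  refine apply_mem_of_mem_supported c (𝟙 _ - projApp c P p ≫ inclApp c P p)
    (fun t ht => ?_) hx
  by_cases hPt : P t.1
  · simp [projApp_single, inclApp_single, hPt]
  · simpa [projApp_single, hPt] using
      single_mem_supported c (K := K) (S := S ∩ {t | ¬ P t.1}) ⟨ht, hPt⟩

end Restrict

section Level

variable {cB : ι → Slab a b n} {cC : κ → Slab a b n} {F : Slab a b n ⥤ Slab a b n}
  (δ : Set.Icc a b)

noncomputable def restrictLevel (φ : freeMod K cB ⟶ F ⋙ freeMod K cC) :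
    freeMod K (fun i : {i // (cB i).1 = δ} => cB i.1) ⟶
      F ⋙ freeMod K (fun j : {j // (cC j).1 = δ} => cC j.1) :=
  incl cB _ ≫ φ ≫ Functor.whiskerLeft F (proj cC _)

variable (hF : ∀ q, (F.obj q).1 ≤ q.1)
include hF

lemma projApp_app_inclApp_projApp (g : freeMod K cC ⟶ F ⋙ freeMod K cB) {q : Slab a b n}
    {y : (freeMod K cC).obj q} (hy : y ∈ supported cC (firstCoord cC ⁻¹' Set.Iic δ)) :
    projApp cB (fun i => (cB i).1 = δ) (F.obj q)
        (g.app q (inclApp cC (fun j => (cC j).1 = δ) q (projApp cC _ q y))) =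
      projApp cB (fun i => (cB i).1 = δ) (F.obj q) (g.app q y) := by
  rw [← sub_eq_zero, ← map_sub, ← map_sub]
  apply projApp_eq_zero_of_mem_supported
  have hlow : inclApp cC (fun j => (cC j).1 = δ) q (projApp cC _ q y) - y ∈
      supported cC (firstCoord cC ⁻¹' Set.Iio δ) := by
    rw [← neg_sub]
    refine neg_mem (supported_mono cC (fun s hs => ?_)
      (sub_inclApp_projApp_mem_supported cC _ hy))
    exact lt_of_le_of_ne hs.1 hs.2
  exact supported_mono cB (fun t ht => ht.ne) (app_mem_supported g hF (isLowerSet_Iio δ) hlow)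

lemma restrictLevel_app_comp_app (f : freeMod K cB ⟶ F ⋙ freeMod K cC)
    (g : freeMod K cC ⟶ F ⋙ freeMod K cB) {p : Slab a b n} (h : p ≤ F.obj (F.obj p))
    (hfg : f.app p ≫ g.app (F.obj p) = (freeMod K cB).map (homOfLE h)) :
    (restrictLevel δ f).app p ≫ (restrictLevel δ g).app (F.obj p) =
      (freeMod K (fun i : {i // (cB i).1 = δ} => cB i.1)).map (homOfLE h) := by
  ext t
  have hy : f.app p (inclApp cB _ p (single _ t)) ∈
      supported cC (firstCoord cC ⁻¹' Set.Iic δ) := by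
    rw [inclApp_single]
    exact app_mem_supported f hF (isLowerSet_Iic δ) (single_mem_supported cB t.1.2.le)
  have hgf : ∀ x, g.app (F.obj p) (f.app p x) = (freeMod K cB).map (homOfLE h) x := fun x => by
    rw [← ConcreteCategory.comp_apply, hfg]
  simp only [restrictLevel, NatTrans.comp_app, Functor.whiskerLeft_app, incl_app, proj_app,
    ConcreteCategory.comp_apply]
  rw [projApp_app_inclApp_projApp δ hF g hy, hgf]
  simp [inclApp_single, map_single, projApp_single, t.1.2]

end Level

end freeMod

section

variable {K}

@[simp]
lemma vshiftFunctor_obj (ε : ℝ) (p : Slab a b n) :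
    (vshiftFunctor a b n ε).obj p = vshift ε p := rfl

lemma VertInterleaved.of_iso {ε : ℝ} {M M' N N' : SlabMod a b n K}
    (eM : M ≅ M') (eN : N ≅ N') (h : VertInterleaved K ε M N) : VertInterleaved K ε M' N' := by
  obtain ⟨f, g, hfg, hgf⟩ := h
  refine ⟨eM.inv ≫ f ≫ Functor.whiskerLeft _ eN.hom,
    eN.inv ≫ g ≫ Functor.whiskerLeft _ eM.hom, fun p hp => ?_, fun p hp => ?_⟩
  · erw [Category.assoc, Category.assoc, Iso.hom_inv_id_app_assoc,
      reassoc_of% (hfg p hp)]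
    simp
  · erw [Category.assoc, Category.assoc, Iso.hom_inv_id_app_assoc,
      reassoc_of% (hgf p hp)]
    simp

end

theorem summand_interleaved_general (a b : ℝ) (n : ℕ) (K : Type) [Field K]
    (ι κ : Type)
    (cM : ι → Slab a b n) (cN : κ → Slab a b n)
    (M N : SlabMod a b n K)
    (hM : Nonempty (M ≅ freeMod K cM)) (hN : Nonempty (N ≅ freeMod K cN))
    (ε : ℝ) (hMN : VertInterleaved K ε M N) (δ : Set.Icc a b) :
    VertInterleaved K ε
      (freeMod K (fun i : {i : ι // (cM i).1 = δ} => cM i.1))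
      (freeMod K (fun j : {j : κ // (cN j).1 = δ} => cN j.1)) := by
  obtain ⟨eM⟩ := hM
  obtain ⟨eN⟩ := hN
  obtain ⟨f, g, hfg, hgf⟩ := hMN.of_iso eM eN
  have hshift : ∀ q : Slab a b n, ((vshiftFunctor a b n ε).obj q).1 ≤ q.1 := fun _ => le_rfl
  exact ⟨freeMod.restrictLevel δ f, freeMod.restrictLevel δ g,
    fun p hp => freeMod.restrictLevel_app_comp_app δ hshift f g hp (hfg p hp),
    fun p hp => freeMod.restrictLevel_app_comp_app δ hshift g f hp (hgf p hp)⟩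

/-- Let `M, N : [a,b] × ℝⁿ → vec` be free persistence modules (with barcodes given by the
generator families `cM : ι → [a,b]×ℝⁿ` and `cN : κ → [a,b]×ℝⁿ`) that are vertically
`ε`-interleaved.  For `δ ∈ [a,b]`, the direct summands `M^δ` and `N^δ` consisting of the
interval summands whose free interval has first coordinate exactly `δ` are also vertically
`ε`-interleaved. -/
theorem summand_interleaved (a b : ℝ) (n : ℕ) (K : Type) [Field K]
    (ι κ : Type) [Fintype ι] [Fintype κ]
    (cM : ι → Slab a b n) (cN : κ → Slab a b n)
    (M N : SlabMod a b n K)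
    (hM : Nonempty (M ≅ freeMod K cM)) (hN : Nonempty (N ≅ freeMod K cN))
    (ε : ℝ) (hε : 0 ≤ ε) (hMN : VertInterleaved K ε M N) (δ : Set.Icc a b) :
    VertInterleaved K ε
      (freeMod K (fun i : {i : ι // (cM i).1 = δ} => cM i.1))
      (freeMod K (fun j : {j : κ // (cN j).1 = δ} => cN j.1)) :=
  summand_interleaved_general a b n K ι κ cM cN M N hM hN ε hMN δ
end

section
/- Let X be a compact geodesic metric space with positive convexity radius ρ_X, containing at least two distinct points, and suppose some (a,b)-standard probability measure μ with support X exists. Then b ≥ 1. -/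
open Metric MeasureTheory

/-- The open ball `B(x,r)` is strongly convex: any two points of its closure are joined by a
unique geodesic (parametrized by arclength on `[0, d]`), whose relative interior lies in the
ball. -/
def IsStronglyConvexBall (X : Type*) [MetricSpace X] (x : X) (r : ℝ) : Prop :=
  ∀ y ∈ closure (ball x r), ∀ y' ∈ closure (ball x r),
    ∃! γ : Set.Icc (0 : ℝ) (dist y y') → X,
      (γ ⟨0, by simp [dist_nonneg]⟩ = y ∧ γ ⟨dist y y', by simp [dist_nonneg]⟩ = y' ∧
        ∀ s t, dist (γ s) (γ t) = |(s : ℝ) - (t : ℝ)|) ∧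
      ∀ s : Set.Icc (0 : ℝ) (dist y y'), 0 < (s : ℝ) → (s : ℝ) < dist y y' → γ s ∈ ball x r

/-- `X` has convexity radius at least `ρ`: every open ball of radius `< ρ` is strongly convex. -/
def ConvexityRadiusGE (X : Type*) [MetricSpace X] (ρ : ℝ) : Prop :=
  ∀ x : X, ∀ r : ℝ, 0 < r → r < ρ → IsStronglyConvexBall X x r

/-- `μ` is an `(a,b)`-standard measure with support the whole space: every open ball of radius
`r > 0` has mass at least `min 1 (a r^b)`. -/
def IsStandardMeasure {X : Type*} [MetricSpace X] [MeasurableSpace X] (μ : Measure X)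
    (a b : ℝ) : Prop :=
  ∀ x : X, ∀ r : ℝ, 0 < r → ENNReal.ofReal (min 1 (a * r ^ b)) ≤ μ (ball x r)

/-- If a compact geodesic metric space with positive convexity radius contains at least two
points and carries an `(a,b)`-standard probability measure with full support, then `b ≥ 1`. -/
theorem one_le_b_of_standard {X : Type*} [MetricSpace X] [MeasurableSpace X] [BorelSpace X]
    [CompactSpace X] [Nontrivial X] (hgeo : IsGeodesicSpace X)
    (ρ : ℝ) (hρ : 0 < ρ) (hconv : ConvexityRadiusGE X ρ)
    (a b : ℝ) (ha : 0 < a) (hb : 0 < b)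
    (μ : Measure X) [IsProbabilityMeasure μ] (hμ : IsStandardMeasure μ a b) :
    1 ≤ b := by
  obtain ⟨x, y, hxy⟩ := exists_pair_ne X
  obtain ⟨γ, hγ0, hγd, hγ⟩ := hgeo x y
  set d : ℝ := dist x y with hd
  have hd0 : 0 < d := dist_pos.mpr hxy
  -- Key counting estimate: for every n ≥ 1,
  -- (n+1) * min 1 (a * (d/(2n))^b) ≤ 1.
  have key : ∀ n : ℕ, 1 ≤ n → ((n : ℝ) + 1) * min 1 (a * (d / (2 * n)) ^ b) ≤ 1 := by
    intro n hn
    have hn0 : (0 : ℝ) < n := by exact_mod_cast hn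
    set r : ℝ := d / (2 * n) with hr
    have hr0 : 0 < r := by positivity
    set p : ℕ → X := fun i => γ (i * d / n) with hp
    have hdistp : ∀ i ≤ n, ∀ j ≤ n, i ≠ j → d / n ≤ dist (p i) (p j) := by
      intro i hi j hj hij
      have hmem : ∀ k : ℕ, k ≤ n → (k * d / n : ℝ) ∈ Set.Icc (0 : ℝ) d := by
        intro k hk
        constructor
        · positivity
        · rw [div_le_iff₀ hn0]
          have : (k : ℝ) ≤ n := by exact_mod_cast hk
          nlinarith
      have := hγ _ (hmem i hi) _ (hmem j hj)
      rw [hp]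
      simp only []
      rw [this]
      have h1 : (1 : ℝ) ≤ |(i : ℝ) - j| := by
        have : (1 : ℤ) ≤ |(i : ℤ) - j| :=
          Int.one_le_abs (sub_ne_zero.mpr (by exact_mod_cast hij))
        exact_mod_cast this
      have : |(i : ℝ) * d / n - j * d / n| = |(i : ℝ) - j| * (d / n) := by
        rw [← abs_of_pos (show (0:ℝ) < d / n by positivity), ← abs_mul]
        ring_nf
      rw [this]
      nlinarith [div_pos hd0 hn0]
    have hdisj : (↑(Finset.range (n + 1)) : Set ℕ).PairwiseDisjoint
        (fun i => ball (p i) r) := by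
      intro i hi j hj hij
      simp only [Finset.coe_range, Set.mem_Iio] at hi hj
      refine ball_disjoint_ball ?_
      have := hdistp i (Nat.lt_succ_iff.mp hi) j (Nat.lt_succ_iff.mp hj) hij
      have : r + r = d / n := by rw [hr]; ring
      linarith [hdistp i (Nat.lt_succ_iff.mp hi) j (Nat.lt_succ_iff.mp hj) hij]
    have hsum : ∑ i ∈ Finset.range (n + 1), μ (ball (p i) r)
        = μ (⋃ i ∈ Finset.range (n + 1), ball (p i) r) :=
      (measure_biUnion_finset hdisj fun i _ => measurableSet_ball).symm
    have hle1 : ∑ i ∈ Finset.range (n + 1), μ (ball (p i) r) ≤ 1 := by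
      rw [hsum]
      calc μ (⋃ i ∈ Finset.range (n + 1), ball (p i) r) ≤ μ Set.univ :=
            measure_mono (Set.subset_univ _)
        _ = 1 := measure_univ
    have hlb : ((n : ENNReal) + 1) * ENNReal.ofReal (min 1 (a * r ^ b))
        ≤ ∑ i ∈ Finset.range (n + 1), μ (ball (p i) r) := by
      calc ((n : ENNReal) + 1) * ENNReal.ofReal (min 1 (a * r ^ b))
          = ∑ _i ∈ Finset.range (n + 1), ENNReal.ofReal (min 1 (a * r ^ b)) := by
            rw [Finset.sum_const, Finset.card_range, nsmul_eq_mul]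
            push_cast
            ring
        _ ≤ _ := Finset.sum_le_sum fun i _ => hμ (p i) r hr0
    have hfinal : ((n : ENNReal) + 1) * ENNReal.ofReal (min 1 (a * r ^ b)) ≤ 1 :=
      hlb.trans hle1
    have hmin0 : 0 ≤ min 1 (a * r ^ b) := by
      apply le_min zero_le_one
      positivity
    have : ENNReal.ofReal (((n : ℝ) + 1) * min 1 (a * r ^ b)) ≤ 1 := by
      rw [ENNReal.ofReal_mul (by positivity)]
      have : ENNReal.ofReal ((n : ℝ) + 1) = (n : ENNReal) + 1 := by
        rw [ENNReal.ofReal_add (by positivity) zero_le_one]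
        simp [ENNReal.ofReal_natCast]
      rw [this]
      exact hfinal
    exact ENNReal.ofReal_le_one.mp this
  -- Now derive b ≥ 1 by contradiction.
  by_contra hcon
  push_neg at hcon
  have h1b : 0 < 1 - b := by linarith
  set c : ℝ := a * (d / 2) ^ b with hc
  have hc0 : 0 < c := by
    apply mul_pos ha
    exact Real.rpow_pos_of_pos (by positivity) b
  obtain ⟨n, hn⟩ := exists_nat_gt (max 1 ((1 / c) ^ (1 / (1 - b))))
  have hn1 : 1 ≤ n := by
    have := (le_max_left 1 ((1 / c) ^ (1 / (1 - b)))).trans_lt hn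
    exact_mod_cast Nat.one_le_iff_ne_zero.mpr (by
      rintro rfl
      norm_num at this)
  have hn0 : (0 : ℝ) < n := by exact_mod_cast hn1
  have hk := key n hn1
  have hsmall : a * (d / (2 * n)) ^ b ≤ 1 := by
    by_contra hbig
    push_neg at hbig
    rw [min_eq_left hbig.le] at hk
    nlinarith
  rw [min_eq_right hsmall] at hk
  -- rewrite (d/(2n))^b = (d/2)^b / n^b
  have hrw : (d / (2 * n)) ^ b = (d / 2) ^ b / (n : ℝ) ^ b := by
    rw [show d / (2 * n) = (d / 2) / (n : ℝ) by ring,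
      Real.div_rpow (by positivity) hn0.le]
  rw [hrw] at hk
  have hnb0 : (0 : ℝ) < (n : ℝ) ^ b := Real.rpow_pos_of_pos hn0 b
  have hkey2 : c * (n : ℝ) ^ (1 - b) ≤ 1 := by
    have h1 : (n : ℝ) ^ ((1 : ℝ) - b) = (n : ℝ) / (n : ℝ) ^ b := by
      rw [Real.rpow_sub hn0, Real.rpow_one]
    rw [hc, h1]
    calc a * (d / 2) ^ b * ((n : ℝ) / (n : ℝ) ^ b)
        = (n : ℝ) * (a * ((d / 2) ^ b / (n : ℝ) ^ b)) := by ring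
      _ ≤ ((n : ℝ) + 1) * (a * ((d / 2) ^ b / (n : ℝ) ^ b)) := by
          apply mul_le_mul_of_nonneg_right (by linarith)
          positivity
      _ ≤ 1 := hk
  have hlarge : 1 / c < (n : ℝ) ^ (1 - b) := by
    have hM : (0 : ℝ) ≤ (1 / c) ^ (1 / (1 - b)) := by positivity
    have hlt : (1 / c) ^ (1 / (1 - b)) < (n : ℝ) :=
      (le_max_right 1 _).trans_lt hn
    have := Real.rpow_lt_rpow hM hlt h1b
    rwa [← Real.rpow_mul (by positivity), one_div_mul_cancel (ne_of_gt h1b),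
      Real.rpow_one] at this
  have : c * (1 / c) < c * (n : ℝ) ^ (1 - b) :=
    mul_lt_mul_of_pos_left hlarge hc0
  rw [mul_one_div, div_self (ne_of_gt hc0)] at this
  linarith
end

section
/- Let X be a compact geodesic metric space and ω : ℝ≥0 → ℝ≥0 a non-decreasing function such that it is NOT the case that δ = O(ω(δ)) as δ → 0 (i.e., for every C > 0 there exist arbitrarily small δ > 0 with δ > C·ω(δ)). Then every ω-continuous function f : X → ℝⁿ is constant. -/
open Metric

/-!
Subdividing a geodesic from `x` to `y` into `⌊d/δ⌋ + 1` pieces of length at most `δ`, where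
`d = dist x y`, and summing the increments of `f` gives `dist (f x) (f y) ≤ (d/δ + 1) ω(δ)`
for every `δ > 0`. Since `ω(δ)/δ` takes arbitrarily small values on `(0, 1]`, the right-hand
side can be made arbitrarily small.
-/

namespace IsGeodesicSpace

variable {X : Type*} [MetricSpace X]

theorem exists_chain (hgeo : IsGeodesicSpace X) (x y : X) {N : ℕ} (hN : 0 < N) :
    ∃ p : ℕ → X, p 0 = x ∧ p N = y ∧ ∀ i < N, dist (p i) (p (i + 1)) = dist x y / N := by
  obtain ⟨γ, hγ0, hγ1, hγ⟩ := hgeo x y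
  set h := dist x y / N
  have hh : 0 ≤ h := by positivity
  have hNh : (N : ℝ) * h = dist x y := mul_div_cancel₀ _ (Nat.cast_ne_zero.mpr hN.ne')
  have hmem : ∀ i ≤ N, (i : ℝ) * h ∈ Set.Icc 0 (dist x y) := fun i hi =>
    ⟨by positivity, hNh ▸ mul_le_mul_of_nonneg_right (by exact_mod_cast hi) hh⟩
  refine ⟨fun i => γ (i * h), by simpa using hγ0, by simpa [hNh] using hγ1, fun i hi => ?_⟩
  rw [hγ _ (hmem i hi.le) _ (hmem (i + 1) hi)]
  push_cast
  rw [show (i : ℝ) * h - (i + 1) * h = -h by ring, abs_neg, abs_of_nonneg hh]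

end IsGeodesicSpace

section ModulusOfContinuity

variable {X Y : Type*} [PseudoMetricSpace X] [PseudoMetricSpace Y] {ω : NNReal → NNReal}
  {f : X → Y}

theorem dist_comp_chain_le (hmono : Monotone ω)
    (hf : ∀ u v, nndist (f u) (f v) ≤ ω (nndist u v)) {p : ℕ → X} {N : ℕ} {δ : NNReal}
    (hp : ∀ i < N, nndist (p i) (p (i + 1)) ≤ δ) :
    dist (f (p 0)) (f (p N)) ≤ N * ω δ := by
  have hstep : ∀ i ∈ Finset.range N, dist (f (p i)) (f (p (i + 1))) ≤ ω δ := fun i hi => by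
    rw [← coe_nndist, NNReal.coe_le_coe]
    exact (hf _ _).trans (hmono (hp i (Finset.mem_range.mp hi)))
  calc dist (f (p 0)) (f (p N))
      ≤ ∑ i ∈ Finset.range N, dist (f (p i)) (f (p (i + 1))) := dist_le_range_sum_dist (f ∘ p) N
    _ ≤ ∑ _i ∈ Finset.range N, (ω δ : ℝ) := Finset.sum_le_sum hstep
    _ = N * ω δ := by simp

end ModulusOfContinuity

namespace IsGeodesicSpace

variable {X Y : Type*} [MetricSpace X] [PseudoMetricSpace Y] {ω : NNReal → NNReal}
  {f : X → Y}

theorem dist_comp_le (hgeo : IsGeodesicSpace X) (hmono : Monotone ω)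
    (hf : ∀ u v, nndist (f u) (f v) ≤ ω (nndist u v)) (x y : X) {δ : NNReal} (hδ : 0 < δ) :
    dist (f x) (f y) ≤ (dist x y / δ + 1) * ω δ := by
  set N := ⌊dist x y / δ⌋₊ + 1
  have hN : dist x y / δ < N := by simpa [N] using Nat.lt_floor_add_one (dist x y / δ)
  obtain ⟨p, hp0, hpN, hp⟩ := hgeo.exists_chain x y (Nat.succ_pos _ : 0 < N)
  have hstep : ∀ i < N, nndist (p i) (p (i + 1)) ≤ δ := fun i hi => by
    rw [← NNReal.coe_le_coe, coe_nndist, hp i hi, div_le_iff₀ (by positivity), mul_comm]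
    exact ((div_lt_iff₀ (by positivity)).mp hN).le
  calc dist (f x) (f y) ≤ N * ω δ := hp0 ▸ hpN ▸ dist_comp_chain_le hmono hf hstep
    _ ≤ (dist x y / δ + 1) * ω δ := by
      gcongr
      simpa [N] using Nat.floor_le (by positivity : 0 ≤ dist x y / δ)

theorem mul_dist_comp_le (hgeo : IsGeodesicSpace X) (hmono : Monotone ω)
    (hf : ∀ u v, nndist (f u) (f v) ≤ ω (nndist u v)) (x y : X) {C δ : NNReal} (hδ : 0 < δ)
    (hδ₁ : δ ≤ 1) (hCδ : C * ω δ < δ) :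
    C * dist (f x) (f y) ≤ dist x y + 1 := by
  have hCδ' : (C : ℝ) * ω δ ≤ δ := by exact_mod_cast hCδ.le
  calc C * dist (f x) (f y) ≤ C * ((dist x y / δ + 1) * ω δ) :=
        mul_le_mul_of_nonneg_left (hgeo.dist_comp_le hmono hf x y hδ) C.coe_nonneg
    _ = (dist x y / δ + 1) * (C * ω δ) := by ring
    _ ≤ (dist x y / δ + 1) * δ := by gcongr
    _ = dist x y + δ := by field_simp
    _ ≤ dist x y + 1 := by gcongr; exact_mod_cast hδ₁

end IsGeodesicSpace

theorem omega_continuous_constant_general {X : Type*} [MetricSpace X]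
    (hgeo : IsGeodesicSpace X) (n : ℕ) (ω : NNReal → NNReal) (hmono : Monotone ω)
    (hnotO : ∀ C : NNReal, 0 < C → ∀ δ₀ : NNReal, 0 < δ₀ →
      ∃ δ : NNReal, 0 < δ ∧ δ ≤ δ₀ ∧ C * ω δ < δ)
    (f : X → (Fin n → ℝ)) (hf : ∀ x y : X, ‖f x - f y‖₊ ≤ ω (nndist x y)) :
    ∀ x y : X, f x = f y := by
  intro x y
  have hf' : ∀ u v, nndist (f u) (f v) ≤ ω (nndist u v) := fun u v =>
    (nndist_eq_nnnorm _ _).trans_le (hf u v)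
  refine eq_of_forall_dist_le fun ε hε => ?_
  have hCpos : 0 < (dist x y + 1) / ε := by positivity
  set C : NNReal := ⟨_, hCpos.le⟩
  obtain ⟨δ, hδ, hδ₁, hCδ⟩ := hnotO C (NNReal.coe_pos.mp hCpos) 1 one_pos
  have hbound := hgeo.mul_dist_comp_le hmono hf' x y hδ hδ₁ hCδ
  have hC : (C : ℝ) = (dist x y + 1) / ε := rfl
  rw [hC, div_mul_eq_mul_div, div_le_iff₀ hε] at hbound
  exact le_of_mul_le_mul_left hbound (by positivity)

/-- If `X` is a compact geodesic space and `ω : ℝ≥0 → ℝ≥0` is non-decreasing and it is *not*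
the case that `δ = O(ω(δ))` as `δ → 0` (i.e. for every `C > 0` there are arbitrarily small
`δ > 0` with `δ > C·ω(δ)`), then every `ω`-continuous function `f : X → ℝⁿ`
(for the sup norm on `ℝⁿ`) is constant. -/
theorem omega_continuous_constant {X : Type*} [MetricSpace X] [CompactSpace X]
    (hgeo : IsGeodesicSpace X) (n : ℕ) (ω : NNReal → NNReal) (hmono : Monotone ω)
    (hnotO : ∀ C : NNReal, 0 < C → ∀ δ₀ : NNReal, 0 < δ₀ →
      ∃ δ : NNReal, 0 < δ ∧ δ ≤ δ₀ ∧ C * ω δ < δ)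
    (f : X → (Fin n → ℝ)) (hf : ∀ x y : X, ‖f x - f y‖₊ ≤ ω (nndist x y)) :
    ∀ x y : X, f x = f y :=
  omega_continuous_constant_general hgeo n ω hmono hnotO f hf
end

section
/- Let X be a metric space, μ an (a,b)-standard probability measure with supp(μ) = X, and X_k a sample of k points drawn i.i.d. from μ. Then for any η > 0, the probability that the Hausdorff distance d_H(X_k, X) exceeds 2η is at most (2^b / (a·η^b)) · exp(−k·a·η^b). -/
/-!
A maximal `η`-separated set `N` is an `η`-net, and the disjoint balls of radius `η/2` around its
points each carry mass at least `a (η/2)^b`, so `|N| ≤ 2^b / (a η^b)`. If `d_H(X_k, X) > 2η`, some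
point is `2η`-far from the sample, so the sample misses the `η`-ball around a point of `N`; for a
fixed point of `N` this has probability at most `(1 - a η^b)^k ≤ exp(-k a η^b)`, and a union bound
over `N` concludes. When `a η^b > 1` every `η`-ball has full mass, so any two points are less than
`2η` apart and the event is empty.
-/

open Metric MeasureTheory ProbabilityTheory

open Set
open scoped ENNReal NNReal

namespace Metric

variable {X : Type*} [PseudoMetricSpace X]

lemma IsSeparated.pairwiseDisjoint_ball {ε : ℝ≥0} {C : Set X} (hC : IsSeparated ε C) :
    C.PairwiseDisjoint fun x => ball x (ε / 2) := by
  intro x hx y hy hxy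
  refine Set.disjoint_left.2 fun z hzx hzy => (hC hx hy hxy).not_gt ?_
  have hxy : dist x y < ε := by
    linarith [dist_triangle x z y, mem_ball'.1 hzx, mem_ball.1 hzy]
  exact edist_lt_coe.2 hxy

lemma hausdorffDist_univ_le_of_forall_dist_le {r : ℝ} (hr : 0 ≤ r) (h : ∀ x y : X, dist x y ≤ r)
    (s : Set X) : hausdorffDist s univ ≤ r := by
  rcases s.eq_empty_or_nonempty with rfl | ⟨x, hx⟩
  · simpa using hr -- `hausdorffDist ∅ _ = 0` by convention
  · exact hausdorffDist_le_of_mem_dist hr (fun y _ => ⟨y, mem_univ y, by simpa using hr⟩)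
      fun y _ => ⟨x, hx, h y x⟩

lemma IsCover.exists_forall_lt_dist_of_two_mul_lt_hausdorffDist {ε : ℝ≥0} {N s : Set X}
    (hN : IsCover ε univ N) (h : 2 * ε < hausdorffDist s univ) :
    ∃ y ∈ N, ∀ x ∈ s, ε < dist x y := by
  obtain ⟨z, hz⟩ : ∃ z, ∀ x ∈ s, 2 * ε < dist x z := by
    by_contra! hclose
    refine h.not_ge (hausdorffDist_le_of_mem_dist (by positivity)
      (fun x _ => ⟨x, mem_univ x, by simp⟩) fun z _ => ?_)
    obtain ⟨x, hx, hxz⟩ := hclose z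
    exact ⟨x, hx, dist_comm z x ▸ hxz⟩
  obtain ⟨y, hyN, hzy⟩ := mem_iUnion₂.1 (isCover_iff_subset_iUnion_closedBall.1 hN (mem_univ z))
  exact ⟨y, hyN, fun x hx => by linarith [hz x hx, dist_triangle_right x z y, mem_closedBall.1 hzy]⟩

variable [MeasurableSpace X] [OpensMeasurableSpace X] {μ : Measure X} {ε : ℝ≥0} {c : ℝ≥0∞}

lemma IsSeparated.encard_mul_le_measure_univ {C : Set X} (hC : IsSeparated ε C)
    (hc : ∀ x ∈ C, c ≤ μ (ball x (ε / 2))) : C.encard * c ≤ μ univ :=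
  calc (C.encard : ℝ≥0∞) * c = ∑' _ : C, c := (ENNReal.tsum_const c).symm
    _ ≤ ∑' x : C, μ (ball x (ε / 2)) := ENNReal.tsum_le_tsum fun x => hc x x.2
    _ ≤ μ (⋃ x : C, ball x (ε / 2)) :=
      tsum_meas_le_meas_iUnion_of_disjoint μ (fun _ => measurableSet_ball)
        fun x y hxy => hC.pairwiseDisjoint_ball x.2 y.2 (Subtype.coe_ne_coe.2 hxy)
    _ ≤ μ univ := measure_mono (subset_univ _)

lemma packingNumber_mul_le_measure_univ {A : Set X} (hc : ∀ x ∈ A, c ≤ μ (ball x (ε / 2))) :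
    packingNumber ε A * c ≤ μ univ := by
  simp only [packingNumber, ENat.toENNReal_iSup, ENNReal.iSup_mul, iSup_le_iff]
  exact fun C hCA hC => hC.encard_mul_le_measure_univ fun x hx => hc x (hCA hx)

end Metric

section Sampling

variable {X Ω : Type*} [MeasurableSpace X] [MeasurableSpace Ω] {μ : Measure X} {P : Measure Ω}

lemma ProbabilityTheory.iIndepFun.measure_iInter_preimage_eq_pow {ι : Type*} [Fintype ι]
    {Z : ι → Ω → X} (hindep : iIndepFun Z P) (hmeas : ∀ i, AEMeasurable (Z i) P)
    (hlaw : ∀ i, P.map (Z i) = μ) {B : Set X} (hB : MeasurableSet B) :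
    P (⋂ i, Z i ⁻¹' B) = μ B ^ Fintype.card ι := by
  rw [hindep.meas_iInter fun i => ⟨B, hB, rfl⟩, ← Finset.card_univ, ← Finset.prod_const]
  exact Finset.prod_congr rfl fun i _ => by
    rw [← hlaw i, Measure.map_apply_of_aemeasurable (hmeas i) hB]

lemma prob_compl_le_ofReal_exp_neg [IsProbabilityMeasure μ] {s : Set X} (hs : MeasurableSet s)
    {t : ℝ} (ht : 0 ≤ t) (h : ENNReal.ofReal t ≤ μ s) :
    μ sᶜ ≤ ENNReal.ofReal (Real.exp (-t)) :=
  calc μ sᶜ = 1 - μ s := prob_compl_eq_one_sub hs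
    _ ≤ 1 - ENNReal.ofReal t := tsub_le_tsub_left h 1
    _ = ENNReal.ofReal (1 - t) := by rw [ENNReal.ofReal_sub 1 ht, ENNReal.ofReal_one]
    _ ≤ ENNReal.ofReal (Real.exp (-t)) :=
      ENNReal.ofReal_le_ofReal (by linarith [Real.add_one_le_exp (-t)])

variable [PseudoMetricSpace X] [OpensMeasurableSpace X]

lemma dist_lt_two_mul_of_forall_measure_ball_eq_one [IsProbabilityMeasure μ] {r : ℝ}
    (h : ∀ x, μ (ball x r) = 1) (x y : X) : dist x y < 2 * r := by
  have hfull (x : X) : ∀ᵐ z ∂μ, z ∈ ball x r :=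
    mem_ae_iff.2 ((prob_compl_eq_zero_iff measurableSet_ball).2 (h x))
  obtain ⟨z, hzx, hzy⟩ := ((hfull x).and (hfull y)).exists
  linarith [dist_triangle x z y, mem_ball'.1 hzx, mem_ball.1 hzy]

lemma measure_two_mul_lt_hausdorffDist_range_le {ι : Type*} [Fintype ι] {Z : ι → Ω → X}
    (hindep : iIndepFun Z P) (hmeas : ∀ i, AEMeasurable (Z i) P) (hlaw : ∀ i, P.map (Z i) = μ)
    {ε : ℝ≥0} {N : Set X} (hN : IsCover ε univ N) (hNc : N.Countable) {q : ℝ≥0∞}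
    (hq : ∀ y ∈ N, μ (ball y ε)ᶜ ≤ q) :
    P {ω | 2 * ε < hausdorffDist (range fun i => Z i ω) univ} ≤ N.encard * q ^ Fintype.card ι := by
  have hsub : {ω | 2 * ε < hausdorffDist (range fun i => Z i ω) univ} ⊆
      ⋃ y ∈ N, ⋂ i, Z i ⁻¹' (ball y ε)ᶜ := fun ω hω => by
    obtain ⟨y, hyN, hy⟩ := hN.exists_forall_lt_dist_of_two_mul_lt_hausdorffDist hω
    exact mem_biUnion hyN (mem_iInter.2 fun i => not_lt.2 (hy _ (mem_range_self i)).le)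
  calc P {ω | 2 * ε < hausdorffDist (range fun i => Z i ω) univ}
      ≤ ∑' y : N, P (⋂ i, Z i ⁻¹' (ball (y : X) ε)ᶜ) := (measure_mono hsub).trans
        (measure_biUnion_le P hNc _)
    _ = ∑' y : N, μ (ball (y : X) ε)ᶜ ^ Fintype.card ι := by
      simp only [hindep.measure_iInter_preimage_eq_pow hmeas hlaw measurableSet_ball.compl]
    _ ≤ ∑' _ : N, q ^ Fintype.card ι := ENNReal.tsum_le_tsum fun y => by gcongr; exact hq y y.2
    _ = N.encard * q ^ Fintype.card ι := ENNReal.tsum_const _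

end Sampling

namespace IsStandardMeasure

variable {X : Type*} [MetricSpace X] [MeasurableSpace X] {μ : Measure X} {a b r : ℝ}

lemma ofReal_le_measure_ball (h : IsStandardMeasure μ a b) (x : X) (hr : 0 < r)
    (h1 : a * r ^ b ≤ 1) : ENNReal.ofReal (a * r ^ b) ≤ μ (ball x r) :=
  min_eq_right h1 ▸ h x r hr

variable [IsProbabilityMeasure μ]

lemma measure_ball_eq_one (h : IsStandardMeasure μ a b) (x : X) (hr : 0 < r)
    (h1 : 1 ≤ a * r ^ b) : μ (ball x r) = 1 :=
  le_antisymm prob_le_one (by simpa [min_eq_left h1] using h x r hr)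

variable [OpensMeasurableSpace X]

lemma hausdorffDist_univ_le_two_mul (h : IsStandardMeasure μ a b) (hr : 0 < r)
    (h1 : 1 ≤ a * r ^ b) (s : Set X) : hausdorffDist s univ ≤ 2 * r :=
  hausdorffDist_univ_le_of_forall_dist_le (by positivity)
    (fun x y => (dist_lt_two_mul_of_forall_measure_ball_eq_one
      (fun x => h.measure_ball_eq_one x hr h1) x y).le) s

lemma packingNumber_univ_le (h : IsStandardMeasure μ a b) (ha : 0 < a) (hb : 0 < b) {ε : ℝ≥0}
    (hε : 0 < ε) (h1 : a * ε ^ b ≤ 1) :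
    packingNumber ε (univ : Set X) ≤ ENNReal.ofReal (2 ^ b / (a * ε ^ b)) := by
  have hc : 0 < a * (ε / 2 : ℝ) ^ b := by positivity
  have hc1 : a * (ε / 2 : ℝ) ^ b ≤ 1 :=
    (mul_le_mul_of_nonneg_left (Real.rpow_le_rpow (by positivity) (by linarith) hb.le)
      ha.le).trans h1
  have hcinv : (a * (ε / 2 : ℝ) ^ b)⁻¹ = 2 ^ b / (a * ε ^ b) := by
    rw [Real.div_rpow (by positivity) (by norm_num)]
    field_simp
  rw [← hcinv, ENNReal.ofReal_inv_of_pos hc, ENNReal.le_inv_iff_mul_le]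
  simpa using packingNumber_mul_le_measure_univ (μ := μ) fun x _ =>
    h.ofReal_le_measure_ball x (by positivity) hc1

end IsStandardMeasure

theorem hausdorff_deviation_bound_general {X : Type*} [MetricSpace X] [MeasurableSpace X] [BorelSpace X]
    {Ω : Type*} [MeasureSpace Ω]
    (μ : Measure X) [IsProbabilityMeasure μ] (a b : ℝ) (ha : 0 < a) (hb : 0 < b)
    (hstd : IsStandardMeasure μ a b) (k : ℕ) (Z : Fin k → Ω → X)
    (hmeas : ∀ i, Measurable (Z i))
    (hlaw : ∀ i, Measure.map (Z i) ℙ = μ)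
    (hindep : iIndepFun Z ℙ)
    (η : ℝ) (hη : 0 < η) :
    ℙ {ω | 2 * η < hausdorffDist (Set.range fun i => Z i ω) (Set.univ : Set X)} ≤
      ENNReal.ofReal ((2 ^ b / (a * η ^ b)) * Real.exp (-(k * a * η ^ b))) := by
  lift η to ℝ≥0 using hη.le
  rcases le_or_gt 1 (a * η ^ b) with h1 | h1
  · have hempty : {ω | 2 * (η : ℝ) < hausdorffDist (range fun i => Z i ω) univ} = ∅ :=
      eq_empty_of_forall_notMem fun ω hω => (hstd.hausdorffDist_univ_le_two_mul hη h1 _).not_gt hω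
    simp [hempty]
  have hpack := hstd.packingNumber_univ_le ha hb (NNReal.coe_pos.1 hη) h1.le
  have hfin : packingNumber η (univ : Set X) ≠ ⊤ := fun htop => by simp [htop] at hpack
  have hNcard := encard_maximalSeparatedSet (ε := η) (A := (univ : Set X)) hfin
  have hNc : (maximalSeparatedSet η (univ : Set X)).Countable :=
    (Set.encard_ne_top_iff.1 (hNcard ▸ hfin)).countable
  calc ℙ {ω | 2 * (η : ℝ) < hausdorffDist (range fun i => Z i ω) univ}
      ≤ packingNumber η (univ : Set X) * ENNReal.ofReal (Real.exp (-(a * η ^ b))) ^ k := by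
        simpa [hNcard] using measure_two_mul_lt_hausdorffDist_range_le hindep
          (fun i => (hmeas i).aemeasurable) hlaw (isCover_maximalSeparatedSet hfin) hNc
          fun y _ => prob_compl_le_ofReal_exp_neg measurableSet_ball (by positivity)
            (hstd.ofReal_le_measure_ball y hη h1.le)
    _ ≤ ENNReal.ofReal (2 ^ b / (a * η ^ b)) * ENNReal.ofReal (Real.exp (-(k * a * η ^ b))) := by
        rw [← ENNReal.ofReal_pow (Real.exp_nonneg _), ← Real.exp_nat_mul, mul_neg, ← mul_assoc]
        exact mul_le_mul_left hpack _
    _ = _ := (ENNReal.ofReal_mul (by positivity)).symm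

/-- Deviation bound for the Hausdorff distance of an i.i.d. sample (Cuevas–Rodríguez-Casal,
Chazal et al.): if `μ` is an `(a,b)`-standard probability measure with support `X` and
`X_k = (Z₁,…,Z_k)` is an i.i.d. `k`-sample from `μ`, then for any `η > 0`,
`ℙ(d_H(X_k, X) > 2η) ≤ (2^b/(a η^b)) · exp(−k a η^b)`. -/
theorem hausdorff_deviation_bound {X : Type*} [MetricSpace X] [MeasurableSpace X] [BorelSpace X]
    {Ω : Type*} [MeasureSpace Ω] [IsProbabilityMeasure (ℙ : Measure Ω)]
    (μ : Measure X) [IsProbabilityMeasure μ] (a b : ℝ) (ha : 0 < a) (hb : 0 < b)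
    (hstd : IsStandardMeasure μ a b) (k : ℕ) (Z : Fin k → Ω → X)
    (hmeas : ∀ i, Measurable (Z i))
    (hlaw : ∀ i, Measure.map (Z i) ℙ = μ)
    (hindep : iIndepFun Z ℙ)
    (η : ℝ) (hη : 0 < η) :
    ℙ {ω | 2 * η < hausdorffDist (Set.range fun i => Z i ω) (Set.univ : Set X)} ≤
      ENNReal.ofReal ((2 ^ b / (a * η ^ b)) * Real.exp (-(k * a * η ^ b))) :=
  hausdorff_deviation_bound_general μ a b ha hb hstd k Z hmeas hlaw hindep η hη
end

section
/- Let X = [0,1]^b with the sup-norm metric, fix k ∈ ℕ with k ≥ 1, set x_k = (ak)^{−1/b} ≤ 1 for a constant a > 0, and define P₁ = (1 − 1/k)·δ₀ + (1/k)·U, where δ₀ is the Dirac mass at the origin and U is the uniform probability measure on [0, x_k]^b. Then P₁ is an (a,b)-standard measure: for every x ∈ supp(P₁) and r > 0, P₁(B(x,r)) ≥ min{a·r^b, 1}. Moreover, the total variation distance between δ₀ and P₁ equals 1/k. -/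
open Metric MeasureTheory

/-- Le Cam lower-bound construction: on `X = [0,1]^b` (viewed inside `ℝ^b` with the sup-norm
metric), with `x_k = (ak)^{-1/b} ≤ 1`, the measure `P₁ = (1−1/k)·δ₀ + (1/k)·U`, where `U` is
the uniform probability measure on `[0,x_k]^b`, is `(a,b)`-standard:
`P₁(B(x,r)) ≥ min{a r^b, 1}` for every `x` in its support `{0} ∪ [0,x_k]^b` and `r > 0`.
Moreover `TV(δ₀, P₁) = 1/k`. -/
theorem lecam_measure_standard_and_tv (b : ℕ) (hb : 1 ≤ b) (a : ℝ) (ha : 0 < a)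
    (k : ℕ) (hk : 1 ≤ k) (xk : ℝ) (hxk_pos : 0 < xk)
    (hxk_def : a * k * xk ^ b = 1) (hxk_le : xk ≤ 1) :
    ∀ (U P₁ : Measure (Fin b → ℝ)),
      U = ENNReal.ofReal (a * k) •
            (volume.restrict (Set.univ.pi fun _ : Fin b => Set.Icc (0 : ℝ) xk)) →
      P₁ = ENNReal.ofReal (1 - 1 / (k : ℝ)) • Measure.dirac (0 : Fin b → ℝ) +
            ENNReal.ofReal (1 / (k : ℝ)) • U →
      (∀ x ∈ ({0} : Set (Fin b → ℝ)) ∪ (Set.univ.pi fun _ : Fin b => Set.Icc (0 : ℝ) xk),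
        ∀ r : ℝ, 0 < r →
          ENNReal.ofReal (min (a * r ^ b) 1) ≤ P₁ (ball x r)) ∧
      (⨆ A : {A : Set (Fin b → ℝ) // MeasurableSet A},
          |((Measure.dirac (0 : Fin b → ℝ)) A.1).toReal - (P₁ A.1).toReal|) = 1 / (k : ℝ) := by
  intro U P₁ hU hP₁
  have hk0 : (0:ℝ) < k := by exact_mod_cast hk
  have hk1 : 1/(k:ℝ) ≤ 1 := by rw [div_le_one hk0]; exact_mod_cast hk
  have hak : (0:ℝ) < a * k := by positivity
  set C : Set (Fin b → ℝ) := Set.univ.pi fun _ : Fin b => Set.Icc (0 : ℝ) xk with hC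
  have hCmeas : MeasurableSet C := MeasurableSet.univ_pi fun i => measurableSet_Icc
  have hvolC : volume C = ENNReal.ofReal (xk ^ b) := by
    rw [hC, volume_pi_pi]
    simp [Real.volume_Icc, ← ENNReal.ofReal_pow hxk_pos.le]
  have hakC : ENNReal.ofReal (a * k) * volume C = 1 := by
    rw [hvolC, ← ENNReal.ofReal_mul hak.le, hxk_def, ENNReal.ofReal_one]
  have hUC : U C = 1 := by
    rw [hU, Measure.smul_apply, Measure.restrict_apply hCmeas, Set.inter_self, smul_eq_mul, hakC]
  have hUle : ∀ A : Set (Fin b → ℝ), MeasurableSet A → U A ≤ 1 := by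
    intro A hA
    rw [hU, Measure.smul_apply, Measure.restrict_apply hA, smul_eq_mul]
    calc ENNReal.ofReal (a * k) * volume (A ∩ C)
        ≤ ENNReal.ofReal (a * k) * volume C :=
          mul_le_mul_right (measure_mono Set.inter_subset_right) _
      _ = 1 := hakC
  have h0C : (0 : Fin b → ℝ) ∈ C := fun i _ => ⟨le_refl 0, hxk_pos.le⟩
  constructor
  · rintro x hx r hr
    have hx' : x ∈ C := by
      rcases hx with hx | hx
      · simp only [Set.mem_singleton_iff] at hx; subst hx; exact h0C
      · exact hx
    by_cases hrx : r ≤ xk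
    · -- use the uniform part
      have hsub : (Set.univ.pi fun i : Fin b => Set.Ioo (max (x i - r) 0) (min (x i + r) xk))
          ⊆ ball x r ∩ C := by
        rw [ball_pi x hr, hC, ← Set.pi_inter_distrib]
        apply Set.pi_mono
        intro i _
        rintro y ⟨h1, h2⟩
        refine ⟨?_, (le_max_right _ _).trans h1.le, (h2.trans_le (min_le_right _ _)).le⟩
        rw [Real.ball_eq_Ioo]
        exact ⟨lt_of_le_of_lt (le_max_left _ _) h1, h2.trans_le (min_le_left _ _)⟩
      have hlen : ∀ i : Fin b,
          ENNReal.ofReal r ≤ volume (Set.Ioo (max (x i - r) 0) (min (x i + r) xk)) := by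
        intro i
        have h0 : 0 ≤ x i := (hx' i trivial).1
        have h1 : x i ≤ xk := (hx' i trivial).2
        rw [Real.volume_Ioo]
        apply ENNReal.ofReal_le_ofReal
        have hm : max (x i - r) 0 + r ≤ min (x i + r) xk := by
          rcases le_total (x i + r) xk with h | h
          · rw [min_eq_left h]
            have := max_le (show x i - r ≤ x i by linarith) h0
            linarith
          · rw [min_eq_right h]
            have := max_le (show x i - r ≤ xk - r by linarith)
              (show (0:ℝ) ≤ xk - r by linarith)
            linarith
        linarith
      have hvol : ENNReal.ofReal (r ^ b) ≤
          volume (Set.univ.pi fun i : Fin b => Set.Ioo (max (x i - r) 0) (min (x i + r) xk)) := by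
        rw [volume_pi_pi, ENNReal.ofReal_pow hr.le]
        calc (ENNReal.ofReal r) ^ b = ∏ _i : Fin b, ENNReal.ofReal r := by
              rw [Finset.prod_const, Finset.card_univ, Fintype.card_fin]
          _ ≤ ∏ i : Fin b, volume (Set.Ioo (max (x i - r) 0) (min (x i + r) xk)) :=
              Finset.prod_le_prod' fun i _ => hlen i
      have hUb : ENNReal.ofReal (a * k) * ENNReal.ofReal (r ^ b) ≤ U (ball x r) := by
        rw [hU, Measure.smul_apply, Measure.restrict_apply measurableSet_ball, smul_eq_mul]
        exact mul_le_mul_right (hvol.trans (measure_mono hsub)) _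
      have e1 : ENNReal.ofReal (1/(k:ℝ)) * (ENNReal.ofReal (a*k) * ENNReal.ofReal (r^b))
          = ENNReal.ofReal (a * r^b) := by
        rw [← ENNReal.ofReal_mul hak.le, ← ENNReal.ofReal_mul (by positivity)]
        congr 1
        field_simp
      calc ENNReal.ofReal (min (a * r ^ b) 1) ≤ ENNReal.ofReal (a * r ^ b) :=
            ENNReal.ofReal_le_ofReal (min_le_left _ _)
        _ = ENNReal.ofReal (1/(k:ℝ)) * (ENNReal.ofReal (a*k) * ENNReal.ofReal (r^b)) := e1.symm
        _ ≤ ENNReal.ofReal (1/(k:ℝ)) * U (ball x r) := mul_le_mul_right hUb _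
        _ ≤ P₁ (ball x r) := by
            rw [hP₁, Measure.add_apply, Measure.smul_apply, Measure.smul_apply,
              smul_eq_mul, smul_eq_mul]
            exact le_add_self
    · push_neg at hrx
      have hball : C ⊆ ball x r := by
        intro y hy
        rw [mem_ball, dist_pi_lt_iff hr]
        intro i
        have hy' := hy i trivial
        have hx'' := hx' i trivial
        rw [Real.dist_eq, abs_lt]
        constructor <;> [linarith [hy'.1, hx''.2]; linarith [hy'.2, hx''.1]]
      have h0ball : (0 : Fin b → ℝ) ∈ ball x r := hball h0C
      have hd : Measure.dirac (0 : Fin b → ℝ) (ball x r) = 1 :=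
        Measure.dirac_apply_of_mem h0ball
      calc ENNReal.ofReal (min (a * r ^ b) 1) ≤ 1 :=
            ENNReal.ofReal_le_one.mpr (min_le_right _ _)
        _ = ENNReal.ofReal (1 - 1/(k:ℝ)) * 1 + ENNReal.ofReal (1/(k:ℝ)) * 1 := by
            rw [mul_one, mul_one, ← ENNReal.ofReal_add (by linarith) (by positivity)]
            norm_num
        _ ≤ P₁ (ball x r) := by
            rw [hP₁, Measure.add_apply, Measure.smul_apply, Measure.smul_apply,
              smul_eq_mul, smul_eq_mul, hd]
            gcongr
            exact hUC ▸ measure_mono hball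
  · haveI : Nonempty {A : Set (Fin b → ℝ) // MeasurableSet A} := ⟨⟨∅, MeasurableSet.empty⟩⟩
    have hP₁A : ∀ A : Set (Fin b → ℝ), MeasurableSet A →
        (P₁ A).toReal = (1 - 1/(k:ℝ)) * ((Measure.dirac (0 : Fin b → ℝ)) A).toReal
          + (1/(k:ℝ)) * (U A).toReal := by
      intro A hA
      have hdfin : ENNReal.ofReal (1 - 1/(k:ℝ)) * Measure.dirac (0 : Fin b → ℝ) A ≠ ⊤ :=
        ENNReal.mul_ne_top ENNReal.ofReal_ne_top
          (ne_top_of_le_ne_top ENNReal.one_ne_top prob_le_one)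
      have hufin : ENNReal.ofReal (1/(k:ℝ)) * U A ≠ ⊤ :=
        ENNReal.mul_ne_top ENNReal.ofReal_ne_top
          (ne_top_of_le_ne_top ENNReal.one_ne_top (hUle A hA))
      rw [hP₁, Measure.add_apply, Measure.smul_apply, Measure.smul_apply,
        smul_eq_mul, smul_eq_mul, ENNReal.toReal_add hdfin hufin,
        ENNReal.toReal_mul, ENNReal.toReal_mul,
        ENNReal.toReal_ofReal (by linarith), ENNReal.toReal_ofReal (by positivity)]
    have hbound : ∀ A : {A : Set (Fin b → ℝ) // MeasurableSet A},
        |((Measure.dirac (0 : Fin b → ℝ)) A.1).toReal - (P₁ A.1).toReal| ≤ 1/(k:ℝ) := by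
      rintro ⟨A, hA⟩
      rw [hP₁A A hA]
      set d := ((Measure.dirac (0 : Fin b → ℝ)) A).toReal with hdd
      set u := (U A).toReal with huu
      have hd01 : d = 0 ∨ d = 1 := by
        rw [hdd, Measure.dirac_apply' _ hA]
        by_cases h : (0 : Fin b → ℝ) ∈ A <;> simp [h]
      have hu0 : (0:ℝ) ≤ u := ENNReal.toReal_nonneg
      have hu1 : u ≤ 1 := by
        have := ENNReal.toReal_mono ENNReal.one_ne_top (hUle A hA)
        simpa using this
      have habs : |d - ((1 - 1/(k:ℝ)) * d + (1/(k:ℝ)) * u)| = (1/(k:ℝ)) * |d - u| := by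
        have he : d - ((1 - 1/(k:ℝ)) * d + (1/(k:ℝ)) * u) = (1/(k:ℝ)) * (d - u) := by ring
        rw [he, abs_mul, abs_of_nonneg (by positivity : (0:ℝ) ≤ 1/(k:ℝ))]
      have hdu : |d - u| ≤ 1 := by
        rw [abs_le]
        rcases hd01 with h | h <;> rw [h] <;> constructor <;> linarith
      calc |d - ((1 - 1/(k:ℝ)) * d + (1/(k:ℝ)) * u)| = (1/(k:ℝ)) * |d - u| := habs
        _ ≤ (1/(k:ℝ)) * 1 := by
            apply mul_le_mul_of_nonneg_left hdu (by positivity)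
        _ = 1/(k:ℝ) := mul_one _
    have hA0 : |((Measure.dirac (0 : Fin b → ℝ)) ({0} : Set (Fin b → ℝ))).toReal
        - (P₁ ({0} : Set (Fin b → ℝ))).toReal| = 1/(k:ℝ) := by
      have hmeas : MeasurableSet ({0} : Set (Fin b → ℝ)) := measurableSet_singleton 0
      have hU0 : U ({0} : Set (Fin b → ℝ)) = 0 := by
        rw [hU, Measure.smul_apply, Measure.restrict_apply hmeas, smul_eq_mul]
        have hz : volume (({0} : Set (Fin b → ℝ)) ∩ C) = 0 := by
          apply measure_mono_null Set.inter_subset_left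
          have hsub0 : ({0} : Set (Fin b → ℝ)) ⊆ Set.univ.pi fun _ : Fin b => ({0} : Set ℝ) := by
            intro y hy i _
            simp only [Set.mem_singleton_iff] at hy ⊢
            rw [hy]; rfl
          apply measure_mono_null hsub0
          rw [volume_pi_pi]
          simp only [Real.volume_singleton, Finset.prod_const, Finset.card_univ,
            Fintype.card_fin]
          exact zero_pow (by omega)
        rw [hz, mul_zero]
      have hd1 : (Measure.dirac (0 : Fin b → ℝ)) ({0} : Set (Fin b → ℝ)) = 1 :=
        Measure.dirac_apply_of_mem rfl
      rw [hP₁A _ hmeas, hU0, hd1]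
      simp only [ENNReal.toReal_one, ENNReal.toReal_zero, mul_one, mul_zero, add_zero]
      have hkpos : (0:ℝ) < 1/(k:ℝ) := by positivity
      rw [abs_of_nonneg (by linarith)]
      ring
    apply le_antisymm
    · exact ciSup_le hbound
    · have hbdd : BddAbove (Set.range fun A : {A : Set (Fin b → ℝ) // MeasurableSet A} =>
          |((Measure.dirac (0 : Fin b → ℝ)) A.1).toReal - (P₁ A.1).toReal|) := by
        refine ⟨1/(k:ℝ), ?_⟩
        rintro _ ⟨A, rfl⟩
        exact hbound A
      exact hA0 ▸ le_ciSup hbdd (⟨{0}, measurableSet_singleton 0⟩ : {A : Set (Fin b → ℝ) // MeasurableSet A})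
end
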